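/- Let m1, m2 be positive integers, μ > 0, ρ2 ≥ 0, let K be a real (m2−1)×m2 matrix, let Ω ⊆ {1,…,m1}×{1,…,m2}, and let G, Z be real m1×m2 matrices. Define g(W) = ½(‖Z − W‖_F² + ρ2‖W Kᵀ‖_F² + μ‖W‖_F²) and K_{μρ2} = (1+μ)I_{m2} + ρ2 Kᵀ K. Then a real m1×m2 matrix W minimizes g over the affine set {W : W_{ij} = G_{ij} for all (i,j) ∈ Ω} if and only if (W K_{μρ2})_{ij} = Z_{ij} for all (i,j) ∉ Ω and W_{ij} = G_{ij} for all (i,j) ∈ Ω; moreover such a minimizer exists and is unique. -/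
import Mathlib


open Matrix BigOperators

noncomputable section

/-- Squared Frobenius norm of a real matrix. -/
def frobSqR {a b : ℕ} (M : Matrix (Fin a) (Fin b) ℝ) : ℝ :=
  ∑ i, ∑ j, (M i j) ^ 2

/-- The objective `g(W) = ½(‖Z − W‖_F² + ρ2‖W Kᵀ‖_F² + μ‖W‖_F²)`. -/
def gObj {m1 m2 : ℕ} (μ ρ2 : ℝ) (K : Matrix (Fin (m2 - 1)) (Fin m2) ℝ)
    (Z W : Matrix (Fin m1) (Fin m2) ℝ) : ℝ :=
  (1 / 2) * (frobSqR (Z - W) + ρ2 * frobSqR (W * Kᵀ) + μ * frobSqR W)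

namespace QSK
variable {a b n : ℕ}

def ip (A B : Matrix (Fin a) (Fin b) ℝ) : ℝ := ∑ i, ∑ j, A i j * B i j

lemma ip_self (A : Matrix (Fin a) (Fin b) ℝ) : ip A A = frobSqR A := by
  simp [ip, frobSqR, sq]

lemma frobSq_nonneg (A : Matrix (Fin a) (Fin b) ℝ) : 0 ≤ frobSqR A := by
  unfold frobSqR; positivity

lemma frobSq_eq_zero {A : Matrix (Fin a) (Fin b) ℝ} (h : frobSqR A = 0) : A = 0 := by
  ext i j
  have h1 : ∀ i ∈ Finset.univ, (0:ℝ) ≤ ∑ j, (A i j)^2 := fun _ _ => by positivity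
  have h2 := (Finset.sum_eq_zero_iff_of_nonneg h1).mp h i (Finset.mem_univ i)
  have h3 : ∀ j ∈ Finset.univ, (0:ℝ) ≤ (A i j)^2 := fun _ _ => sq_nonneg _
  have h4 := (Finset.sum_eq_zero_iff_of_nonneg h3).mp h2 j (Finset.mem_univ j)
  simpa using sq_eq_zero_iff.mp h4

lemma ip_add_left (A B C : Matrix (Fin a) (Fin b) ℝ) : ip (A + B) C = ip A C + ip B C := by
  simp [ip, Matrix.add_apply, add_mul, Finset.sum_add_distrib]

lemma ip_sub_left (A B C : Matrix (Fin a) (Fin b) ℝ) : ip (A - B) C = ip A C - ip B C := by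
  simp [ip, Matrix.sub_apply, sub_mul, Finset.sum_sub_distrib]

lemma ip_smul_left (c : ℝ) (A B : Matrix (Fin a) (Fin b) ℝ) : ip (c • A) B = c * ip A B := by
  simp [ip, Matrix.smul_apply, smul_eq_mul, Finset.mul_sum, mul_assoc]

lemma frobSq_add (A B : Matrix (Fin a) (Fin b) ℝ) :
    frobSqR (A + B) = frobSqR A + 2 * ip A B + frobSqR B := by
  simp only [frobSqR, ip, Matrix.add_apply, Finset.mul_sum, ← Finset.sum_add_distrib]
  exact Finset.sum_congr rfl fun i _ => Finset.sum_congr rfl fun j _ => by ring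

lemma frobSq_sub (A B : Matrix (Fin a) (Fin b) ℝ) :
    frobSqR (A - B) = frobSqR A - 2 * ip A B + frobSqR B := by
  simp only [frobSqR, ip, Matrix.sub_apply, Finset.mul_sum]
  rw [← Finset.sum_sub_distrib, ← Finset.sum_add_distrib]
  refine Finset.sum_congr rfl fun i _ => ?_
  rw [← Finset.sum_sub_distrib, ← Finset.sum_add_distrib]
  exact Finset.sum_congr rfl fun j _ => by ring

lemma ip_mulKt (A B : Matrix (Fin a) (Fin b) ℝ) (K : Matrix (Fin n) (Fin b) ℝ) :
    ip (A * Kᵀ) (B * Kᵀ) = ip (A * (Kᵀ * K)) B := by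
  simp only [ip, Matrix.mul_apply, Matrix.transpose_apply, Finset.sum_mul, Finset.mul_sum]
  refine Finset.sum_congr rfl fun i _ => ?_
  rw [Finset.sum_comm]
  refine Finset.sum_congr rfl fun l _ => ?_
  rw [Finset.sum_comm]
  refine Finset.sum_congr rfl fun j _ => ?_
  refine Finset.sum_congr rfl fun k _ => by ring

lemma mul_Kmu (μ ρ2 : ℝ) (K : Matrix (Fin n) (Fin b) ℝ) (W : Matrix (Fin a) (Fin b) ℝ) :
    W * ((1 + μ) • (1 : Matrix (Fin b) (Fin b) ℝ) + ρ2 • (Kᵀ * K))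
      = (1 + μ) • W + ρ2 • (W * (Kᵀ * K)) := by
  rw [Matrix.mul_add, Matrix.mul_smul, Matrix.mul_smul, Matrix.mul_one]

lemma frobSq_smul (c : ℝ) (A : Matrix (Fin a) (Fin b) ℝ) :
    frobSqR (c • A) = c ^ 2 * frobSqR A := by
  simp only [frobSqR, Matrix.smul_apply, smul_eq_mul, mul_pow, Finset.mul_sum]

lemma expand {m1 m2 : ℕ} (μ ρ2 : ℝ) (K : Matrix (Fin (m2 - 1)) (Fin m2) ℝ)
    (Z W H : Matrix (Fin m1) (Fin m2) ℝ) :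
    gObj μ ρ2 K Z (W + H) = gObj μ ρ2 K Z W
      + ip (W * ((1 + μ) • (1 : Matrix (Fin m2) (Fin m2) ℝ) + ρ2 • (Kᵀ * K)) - Z) H
      + (1/2) * ((1 + μ) * frobSqR H + ρ2 * frobSqR (H * Kᵀ)) := by
  have h1 : Z - (W + H) = (Z - W) - H := by abel
  simp only [gObj, h1, Matrix.add_mul, frobSq_sub, frobSq_add, ip_mulKt,
    ip_sub_left, mul_Kmu, ip_add_left, ip_smul_left]
  ring

lemma quad_zero (a c : ℝ) (hc : 0 ≤ c) (h : ∀ t : ℝ, 0 ≤ t * a + t ^ 2 * c) : a = 0 := by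
  by_contra ha
  have hc1 : (0:ℝ) < c + 1 := by linarith
  have key : (-a / (c+1)) * a + (-a / (c+1)) ^ 2 * c = -(a^2) * 1 / (c+1)^2 := by
    field_simp; ring
  have h2 := h (-a / (c+1))
  rw [key] at h2
  have h3 : -(a^2) * 1 / (c+1)^2 < 0 := by
    apply div_neg_of_neg_of_pos
    · have : 0 < a ^ 2 := by positivity
      linarith
    · positivity
  linarith

lemma ip_stdBasis (A : Matrix (Fin a) (Fin b) ℝ) (i : Fin a) (j : Fin b) (t : ℝ) :
    ip A (Matrix.single i j t) = A i j * t := by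
  simp only [ip, Matrix.single, Matrix.of_apply, mul_ite, mul_zero]
  rw [Finset.sum_eq_single i]
  · rw [Finset.sum_eq_single j]
    · simp
    · intro k _ hk; simp [hk.symm]
    · simp
  · intro k _ hk
    apply Finset.sum_eq_zero; intro l _; simp [hk.symm]
  · simp

lemma ip_Kmu_self {m1 m2 : ℕ} (μ ρ2 : ℝ) (K : Matrix (Fin (m2-1)) (Fin m2) ℝ)
    (H : Matrix (Fin m1) (Fin m2) ℝ) :
    ip (H * ((1 + μ) • (1 : Matrix (Fin m2) (Fin m2) ℝ) + ρ2 • (Kᵀ * K))) H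
      = (1 + μ) * frobSqR H + ρ2 * frobSqR (H * Kᵀ) := by
  rw [mul_Kmu, ip_add_left, ip_smul_left, ip_smul_left, ip_self, ← ip_mulKt H H K, ip_self]

lemma key_zero {m1 m2 : ℕ} (μ ρ2 : ℝ) (hμ : 0 < μ) (hρ2 : 0 ≤ ρ2)
    (K : Matrix (Fin (m2-1)) (Fin m2) ℝ) (Ω : Finset (Fin m1 × Fin m2))
    (H : Matrix (Fin m1) (Fin m2) ℝ)
    (hOn : ∀ p ∈ Ω, H p.1 p.2 = 0)
    (hOff : ∀ p ∉ Ω,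
      (H * ((1 + μ) • (1 : Matrix (Fin m2) (Fin m2) ℝ) + ρ2 • (Kᵀ * K))) p.1 p.2 = 0) :
    H = 0 := by
  have hip : ip (H * ((1 + μ) • (1 : Matrix (Fin m2) (Fin m2) ℝ) + ρ2 • (Kᵀ * K))) H = 0 := by
    apply Finset.sum_eq_zero; intro i _
    apply Finset.sum_eq_zero; intro j _
    by_cases h : (i, j) ∈ Ω
    · rw [hOn (i, j) h, mul_zero]
    · rw [hOff (i, j) h, zero_mul]
  rw [ip_Kmu_self] at hip
  have h1 := frobSq_nonneg H
  have h2 := frobSq_nonneg (H * Kᵀ)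
  have h3 : frobSqR H = 0 := by nlinarith
  exact frobSq_eq_zero h3

def Lmap {m1 m2 : ℕ} (Ω : Finset (Fin m1 × Fin m2)) (M : Matrix (Fin m2) (Fin m2) ℝ) :
    Matrix (Fin m1) (Fin m2) ℝ →ₗ[ℝ] Matrix (Fin m1) (Fin m2) ℝ where
  toFun H := Matrix.of fun i j => if (i, j) ∈ Ω then H i j else (H * M) i j
  map_add' A B := by
    ext i j; by_cases h : (i, j) ∈ Ω <;> simp [h, Matrix.add_mul]
  map_smul' c A := by
    ext i j; by_cases h : (i, j) ∈ Ω <;> simp [h, Matrix.smul_mul]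

lemma main_iff {m1 m2 : ℕ} (μ ρ2 : ℝ) (hμ : 0 < μ) (hρ2 : 0 ≤ ρ2)
    (K : Matrix (Fin (m2-1)) (Fin m2) ℝ) (Ω : Finset (Fin m1 × Fin m2))
    (G Z W : Matrix (Fin m1) (Fin m2) ℝ) :
    ((∀ p ∈ Ω, W p.1 p.2 = G p.1 p.2) ∧
      ∀ W' : Matrix (Fin m1) (Fin m2) ℝ,
        (∀ p ∈ Ω, W' p.1 p.2 = G p.1 p.2) → gObj μ ρ2 K Z W ≤ gObj μ ρ2 K Z W') ↔
    ((∀ p : Fin m1 × Fin m2, p ∉ Ω →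
        (W * ((1 + μ) • (1 : Matrix (Fin m2) (Fin m2) ℝ) + ρ2 • (Kᵀ * K))) p.1 p.2 =
          Z p.1 p.2) ∧
      (∀ p ∈ Ω, W p.1 p.2 = G p.1 p.2)) := by
  constructor
  · rintro ⟨hfeas, hmin⟩
    refine ⟨?_, hfeas⟩
    intro p hp
    set D := W * ((1 + μ) • (1 : Matrix (Fin m2) (Fin m2) ℝ) + ρ2 • (Kᵀ * K)) - Z with hDdef
    set E := Matrix.single p.1 p.2 (1:ℝ) with hEdef
    set c := (1/2) * ((1 + μ) * frobSqR E + ρ2 * frobSqR (E * Kᵀ)) with hcdef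
    have hc : 0 ≤ c := by
      have h1 := frobSq_nonneg E
      have h2 := frobSq_nonneg (E * Kᵀ)
      have : (0:ℝ) < 1 + μ := by linarith
      rw [hcdef]; nlinarith
    have hD : D p.1 p.2 = 0 := by
      apply quad_zero (D p.1 p.2) c hc
      intro t
      have hfeas' : ∀ q ∈ Ω, (W + t • E) q.1 q.2 = G q.1 q.2 := by
        intro q hq
        have hE0 : E q.1 q.2 = 0 := by
          rw [hEdef]
          apply Matrix.single_apply_of_ne
          rintro ⟨h1, h2⟩
          exact hp (by rw [show p = q from Prod.ext h1 h2]; exact hq)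
        simp [Matrix.add_apply, Matrix.smul_apply, hE0, hfeas q hq]
      have hle := hmin (W + t • E) hfeas'
      rw [expand] at hle
      rw [Matrix.smul_mul, frobSq_smul, frobSq_smul] at hle
      have hip : ip D (t • E) = t * (D p.1 p.2) := by
        rw [hEdef, Matrix.smul_single, smul_eq_mul, mul_one, ip_stdBasis]
        ring
      rw [← hDdef, hip] at hle
      have : (1/2) * ((1 + μ) * (t^2 * frobSqR E) + ρ2 * (t^2 * frobSqR (E * Kᵀ)))
          = t^2 * c := by rw [hcdef]; ring
      rw [this] at hle
      linarith
    rw [hDdef, Matrix.sub_apply] at hD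
    linarith
  · rintro ⟨hstat, hfeas⟩
    refine ⟨hfeas, ?_⟩
    intro W' hW'
    have he := expand μ ρ2 K Z W (W' - W)
    rw [add_sub_cancel] at he
    have hip : ip (W * ((1 + μ) • (1 : Matrix (Fin m2) (Fin m2) ℝ) + ρ2 • (Kᵀ * K)) - Z)
        (W' - W) = 0 := by
      apply Finset.sum_eq_zero; intro i _
      apply Finset.sum_eq_zero; intro j _
      by_cases h : (i, j) ∈ Ω
      · have : (W' - W) i j = 0 := by
          rw [Matrix.sub_apply, hW' (i, j) h, hfeas (i, j) h, sub_self]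
        rw [this, mul_zero]
      · have : (W * ((1 + μ) • (1 : Matrix (Fin m2) (Fin m2) ℝ) + ρ2 • (Kᵀ * K)) - Z) i j
            = 0 := by
          rw [Matrix.sub_apply, hstat (i, j) h, sub_self]
        rw [this, zero_mul]
    rw [he, hip]
    have h1 := frobSq_nonneg (W' - W)
    have h2 := frobSq_nonneg ((W' - W) * Kᵀ)
    nlinarith

end QSK

open QSK

/-- `W` minimizes `g` over `{W : W_{ij} = G_{ij} on Ω}` iff
`(W K_{μρ2})_{ij} = Z_{ij}` off `Ω` and `W_{ij} = G_{ij}` on `Ω`;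
moreover the minimizer exists and is unique. -/
theorem quadratic_subproblem_KKT (m1 m2 : ℕ) (hm1 : 0 < m1) (hm2 : 0 < m2)
    (μ ρ2 : ℝ) (hμ : 0 < μ) (hρ2 : 0 ≤ ρ2)
    (K : Matrix (Fin (m2 - 1)) (Fin m2) ℝ)
    (Ω : Finset (Fin m1 × Fin m2))
    (G Z : Matrix (Fin m1) (Fin m2) ℝ) :
    (∀ W : Matrix (Fin m1) (Fin m2) ℝ,
        ((∀ p ∈ Ω, W p.1 p.2 = G p.1 p.2) ∧
          ∀ W' : Matrix (Fin m1) (Fin m2) ℝ,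
            (∀ p ∈ Ω, W' p.1 p.2 = G p.1 p.2) → gObj μ ρ2 K Z W ≤ gObj μ ρ2 K Z W') ↔
        ((∀ p : Fin m1 × Fin m2, p ∉ Ω →
            (W * ((1 + μ) • (1 : Matrix (Fin m2) (Fin m2) ℝ) + ρ2 • (Kᵀ * K))) p.1 p.2 =
              Z p.1 p.2) ∧
          (∀ p ∈ Ω, W p.1 p.2 = G p.1 p.2))) ∧
      (∃! W : Matrix (Fin m1) (Fin m2) ℝ,
        (∀ p ∈ Ω, W p.1 p.2 = G p.1 p.2) ∧
          ∀ W' : Matrix (Fin m1) (Fin m2) ℝ,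
            (∀ p ∈ Ω, W' p.1 p.2 = G p.1 p.2) → gObj μ ρ2 K Z W ≤ gObj μ ρ2 K Z W') := by
  have hiff := fun W => main_iff μ ρ2 hμ hρ2 K Ω G Z W
  refine ⟨hiff, ?_⟩
  -- existence via injective-implies-surjective
  set M := (1 + μ) • (1 : Matrix (Fin m2) (Fin m2) ℝ) + ρ2 • (Kᵀ * K) with hM
  have hinj : Function.Injective (Lmap Ω M) := by
    intro x y hxy
    have h0 : Lmap Ω M (x - y) = 0 := by rw [map_sub, hxy, sub_self]
    have hent : ∀ i j, (if (i, j) ∈ Ω then (x - y) i j else ((x - y) * M) i j) = 0 := by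
      intro i j
      simpa [Lmap] using congrFun (congrFun h0 i) j
    have hz : x - y = 0 := by
      apply key_zero μ ρ2 hμ hρ2 K Ω (x - y)
      · intro p hp; have := hent p.1 p.2; rwa [if_pos hp] at this
      · intro p hp; have := hent p.1 p.2; rwa [if_neg hp] at this
    exact sub_eq_zero.mp hz
  have hsurj : Function.Surjective (Lmap Ω M) :=
    (LinearMap.injective_iff_surjective).mp hinj
  obtain ⟨W0, hW0⟩ := hsurj (Matrix.of fun i j => if (i, j) ∈ Ω then G i j else Z i j)
  have hent0 : ∀ i j, (if (i, j) ∈ Ω then W0 i j else (W0 * M) i j)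
      = (if (i, j) ∈ Ω then G i j else Z i j) := by
    intro i j
    simpa [Lmap] using congrFun (congrFun hW0 i) j
  have hW0on : ∀ p ∈ Ω, W0 p.1 p.2 = G p.1 p.2 := by
    intro p hp; have := hent0 p.1 p.2; rwa [if_pos hp, if_pos hp] at this
  have hW0off : ∀ p : Fin m1 × Fin m2, p ∉ Ω → (W0 * M) p.1 p.2 = Z p.1 p.2 := by
    intro p hp; have := hent0 p.1 p.2; rwa [if_neg hp, if_neg hp] at this
  have hmin0 := (hiff W0).mpr ⟨hW0off, hW0on⟩
  refine ⟨W0, hmin0, ?_⟩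
  intro W1 hmin1
  obtain ⟨hstat1, hfeas1⟩ := (hiff W1).mp hmin1
  have hz : W1 - W0 = 0 := by
    apply key_zero μ ρ2 hμ hρ2 K Ω (W1 - W0)
    · intro p hp
      rw [Matrix.sub_apply, hfeas1 p hp, hW0on p hp, sub_self]
    · intro p hp
      rw [Matrix.sub_mul, Matrix.sub_apply, hstat1 p hp, hW0off p hp, sub_self]
  exact sub_eq_zero.mp hz
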